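/- On H = ℓ²(Λ), Λ = {(n,i,j) : 2n ∈ ℕ, i,j ∈ {-n,…,n}}, let D be the (unbounded, diagonal) operator D e^{(n)}_{ij} = (2δ₀(n-i) - 1)·2n·e^{(n)}_{ij} (so |D| e^{(n)}_{ij} = 2n·e^{(n)}_{ij}), let P be the orthogonal projection onto the span of the basis vectors with i = n, let F = 2P - 1, and let α be the q = 0 operator given by α e^{(n)}_{ij} = e^{(n-1/2)}_{i-1/2,j-1/2} if i > -n and j > -n and α e^{(n)}_{ij} = 0 otherwise. Then: (i) |D|α - α|D| = -α and |D|α* - α*|D| = α* (as identities on basis vectors / on the natural domain); (ii) Fα = αF; (iii) α(Dα* - α*D) = F. -/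

import Mathlib

/-- The index set `Λ = {(n,i,j) : 2n ∈ ℕ, i,j ∈ {-n,…,n}}`, encoded via the integer
coordinates `n₂ = 2n`, `x = n+i ∈ {0,…,2n}`, `y = n+j ∈ {0,…,2n}` (so `i = n ↔ x = 2n`). -/
abbrev Idx : Type := {p : ℕ × ℕ × ℕ // p.2.1 ≤ p.1 ∧ p.2.2 ≤ p.1}

/-- The natural domain: finite linear combinations of the basis vectors `e^{(n)}_{ij}`. -/
abbrev V : Type := Idx →₀ ℂ

/-- The basis vector `e^{(n)}_{ij}`. -/
noncomputable def bv (p : Idx) : V := Finsupp.single p 1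

/-- `vec n x y` is the basis vector with (integer-encoded) indices `(n,x,y)` when those
indices lie in `Λ`, and `0` otherwise. -/
noncomputable def vec (n x y : ℤ) : V :=
  if h : 0 ≤ n ∧ 0 ≤ x ∧ x ≤ n ∧ 0 ≤ y ∧ y ≤ n then
    bv ⟨(n.toNat, x.toNat, y.toNat), by refine ⟨?_, ?_⟩ <;> dsimp only <;> omega⟩
  else 0

/-- The inner product `⟨u,v⟩ = ∑ conj(u_p)·v_p` on the natural domain. -/
noncomputable def inn (u v : V) : ℂ := u.sum fun p a => (starRingEnd ℂ) a * v p

/-- The `q = 0` operator `α`: `α e^{(n)}_{ij} = e^{(n-1/2)}_{i-1/2,j-1/2}` if `i > -n` and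
`j > -n` (i.e. `x > 0` and `y > 0`), and `0` otherwise; in the encoded coordinates
`α` sends `(n,x,y)` to `(n-1,x-1,y-1)`. -/
noncomputable def alphaOp : V →ₗ[ℂ] V :=
  Finsupp.lift V ℂ Idx fun p =>
    vec ((p.1.1 : ℤ) - 1) ((p.1.2.1 : ℤ) - 1) ((p.1.2.2 : ℤ) - 1)

/-- The orthogonal projection `P` onto the span of the basis vectors with `i = n`
(i.e. `x = 2n`). -/
noncomputable def Pop : V →ₗ[ℂ] V :=
  Finsupp.lift V ℂ Idx fun p => if p.1.2.1 = p.1.1 then bv p else 0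

/-- `F = 2P - 1`. -/
noncomputable def Fop : V →ₗ[ℂ] V := 2 • Pop - LinearMap.id

/-- The Dirac operator `D e^{(n)}_{ij} = (2δ₀(n-i) - 1)·2n·e^{(n)}_{ij}` (here the first
coordinate of the index is `2n`). -/
noncomputable def Dop : V →ₗ[ℂ] V :=
  Finsupp.lift V ℂ Idx fun p =>
    ((2 * (if p.1.2.1 = p.1.1 then (1 : ℂ) else 0) - 1) * (p.1.1 : ℂ)) • bv p

/-- `|D| e^{(n)}_{ij} = 2n·e^{(n)}_{ij}`. -/
noncomputable def absDop : V →ₗ[ℂ] V :=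
  Finsupp.lift V ℂ Idx fun p => ((p.1.1 : ℂ)) • bv p

lemma lift_single (f : Idx → V) (p : Idx) (c : ℂ) :
    Finsupp.lift V ℂ Idx f (Finsupp.single p c) = c • f p := by
  simp [Finsupp.lift_apply, Finsupp.sum_single_index]

def sUp (p : Idx) : Idx :=
  ⟨(p.1.1 + 1, p.1.2.1 + 1, p.1.2.2 + 1), ⟨Nat.succ_le_succ p.2.1, Nat.succ_le_succ p.2.2⟩⟩

lemma sUp_inj : Function.Injective sUp := by
  rintro ⟨⟨n, x, y⟩, h⟩ ⟨⟨n', x', y'⟩, h'⟩ hh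
  simp only [sUp, Subtype.mk.injEq, Prod.mk.injEq] at hh ⊢
  omega

noncomputable def aStar : V →ₗ[ℂ] V := Finsupp.lmapDomain ℂ ℂ sUp

lemma aStar_bv (p : Idx) : aStar (bv p) = bv (sUp p) := by
  simp [aStar, bv, Finsupp.lmapDomain_apply, Finsupp.mapDomain_single]

lemma alphaOp_bv {n x y : ℕ} (hx : x ≤ n) (hy : y ≤ n) :
    alphaOp (bv ⟨(n, x, y), hx, hy⟩) =
      if 0 < x ∧ 0 < y then bv ⟨(n - 1, x - 1, y - 1), by dsimp only; omega, by dsimp only; omega⟩ else 0 := by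
  rw [show bv ⟨(n,x,y),hx,hy⟩ = Finsupp.single ⟨(n,x,y),hx,hy⟩ 1 from rfl, alphaOp,
    lift_single, one_smul]
  show vec ((n:ℤ) - 1) ((x:ℤ) - 1) ((y:ℤ) - 1) = _
  rw [vec]
  split_ifs with h1 h2 h2
  · congr 1
    apply Subtype.ext
    simp only [Prod.mk.injEq]
    omega
  · exfalso; omega
  · exfalso; omega
  · rfl

lemma alphaOp_bv_up (p : Idx) : alphaOp (bv (sUp p)) = bv p := by
  obtain ⟨⟨n, x, y⟩, hx, hy⟩ := p
  have hx' : x ≤ n := hx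
  have hy' : y ≤ n := hy
  rw [show sUp ⟨(n,x,y),hx,hy⟩ = ⟨(n+1,x+1,y+1), Nat.succ_le_succ hx', Nat.succ_le_succ hy'⟩ from rfl,
    alphaOp_bv (Nat.succ_le_succ hx') (Nat.succ_le_succ hy')]
  simp

lemma Pop_bv {n x y : ℕ} (hx : x ≤ n) (hy : y ≤ n) :
    Pop (bv ⟨(n, x, y), hx, hy⟩) =
      (if x = n then (1:ℂ) else 0) • bv ⟨(n,x,y),hx,hy⟩ := by
  rw [show bv ⟨(n,x,y),hx,hy⟩ = Finsupp.single ⟨(n,x,y),hx,hy⟩ 1 from rfl, Pop,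
    lift_single, one_smul]
  show (if x = n then bv _ else 0) = _
  split_ifs <;> simp [bv]

lemma Fop_bv {n x y : ℕ} (hx : x ≤ n) (hy : y ≤ n) :
    Fop (bv ⟨(n, x, y), hx, hy⟩) =
      (2 * (if x = n then (1:ℂ) else 0) - 1) • bv ⟨(n,x,y),hx,hy⟩ := by
  simp only [Fop, LinearMap.sub_apply, LinearMap.smul_apply, LinearMap.id_apply,
    Pop_bv hx hy, sub_smul, one_smul, smul_smul]
  norm_num [two_smul, smul_smul]

lemma Dop_bv {n x y : ℕ} (hx : x ≤ n) (hy : y ≤ n) :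
    Dop (bv ⟨(n, x, y), hx, hy⟩) =
      ((2 * (if x = n then (1:ℂ) else 0) - 1) * (n:ℂ)) • bv ⟨(n,x,y),hx,hy⟩ := by
  rw [show bv ⟨(n,x,y),hx,hy⟩ = Finsupp.single ⟨(n,x,y),hx,hy⟩ 1 from rfl, Dop,
    lift_single, one_smul]
  rfl

lemma absDop_bv {n x y : ℕ} (hx : x ≤ n) (hy : y ≤ n) :
    absDop (bv ⟨(n, x, y), hx, hy⟩) = (n:ℂ) • bv ⟨(n,x,y),hx,hy⟩ := by
  rw [show bv ⟨(n,x,y),hx,hy⟩ = Finsupp.single ⟨(n,x,y),hx,hy⟩ 1 from rfl, absDop,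
    lift_single, one_smul]
  rfl

lemma alphaOp_apply (v : V) (r : Idx) : (alphaOp v) r = v (sUp r) := by
  induction v using Finsupp.induction_linear with
  | zero => simp
  | add f g hf hg => simp [map_add, Finsupp.add_apply, hf, hg]
  | single q c =>
    obtain ⟨⟨n, x, y⟩, hx, hy⟩ := q
    have hx' : x ≤ n := hx
    have hy' : y ≤ n := hy
    rw [show (Finsupp.single (⟨(n,x,y),hx,hy⟩:Idx) c : V) = c • bv ⟨(n,x,y),hx,hy⟩ by
      simp [bv], map_smul, Finsupp.smul_apply, Finsupp.smul_apply, alphaOp_bv hx' hy']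
    obtain ⟨⟨m, a, b⟩, ha, hb⟩ := r
    split_ifs with h
    · simp only [bv, sUp, Finsupp.single_apply, Subtype.ext_iff, Prod.ext_iff, smul_eq_mul]
      have heq : (n - 1 = m ∧ x - 1 = a ∧ y - 1 = b) ↔ (n = m + 1 ∧ x = a + 1 ∧ y = b + 1) := by
        omega
      simp only [heq]
    · simp only [bv, sUp, Finsupp.single_apply, Subtype.ext_iff, Prod.ext_iff, smul_zero,
        smul_eq_mul]
      rw [if_neg (by omega), mul_zero]
      simp

lemma lhom_ext_bv {φ ψ : V →ₗ[ℂ] V} (h : ∀ p, φ (bv p) = ψ (bv p)) : φ = ψ := by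
  apply Finsupp.lhom_ext
  intro a b
  have hb : (Finsupp.single a b : V) = b • bv a := by simp [bv]
  rw [hb, map_smul, map_smul, h]

lemma adj_prop (u v : V) : inn (aStar u) v = inn u (alphaOp v) := by
  unfold inn aStar
  rw [Finsupp.lmapDomain_apply, Finsupp.sum_mapDomain_index_inj sUp_inj]
  exact Finsupp.sum_congr fun p _ => by rw [alphaOp_apply]

lemma id1 : absDop ∘ₗ alphaOp - alphaOp ∘ₗ absDop = -alphaOp := by
  apply lhom_ext_bv
  rintro ⟨⟨n, x, y⟩, hx, hy⟩
  have hx' : x ≤ n := hx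
  have hy' : y ≤ n := hy
  simp only [LinearMap.sub_apply, LinearMap.comp_apply, LinearMap.neg_apply,
    absDop_bv hx' hy', map_smul, alphaOp_bv hx' hy']
  split_ifs with h
  · rw [absDop_bv (by omega) (by omega)]
    have hn : (((n - 1 : ℕ)) : ℂ) = (n : ℂ) - 1 := by
      have h1 : 1 ≤ n := by omega
      push_cast [h1]
      ring
    rw [hn]
    module
  · simp

lemma id2 : absDop ∘ₗ aStar - aStar ∘ₗ absDop = aStar := by
  apply lhom_ext_bv
  rintro ⟨⟨n, x, y⟩, hx, hy⟩
  have hx' : x ≤ n := hx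
  have hy' : y ≤ n := hy
  simp only [LinearMap.sub_apply, LinearMap.comp_apply, absDop_bv hx' hy', map_smul,
    aStar_bv]
  rw [show sUp ⟨(n,x,y),hx,hy⟩ = ⟨(n+1,x+1,y+1), Nat.succ_le_succ hx', Nat.succ_le_succ hy'⟩
      from rfl,
    absDop_bv (Nat.succ_le_succ hx') (Nat.succ_le_succ hy')]
  push_cast
  module

lemma id3 : Fop ∘ₗ alphaOp = alphaOp ∘ₗ Fop := by
  apply lhom_ext_bv
  rintro ⟨⟨n, x, y⟩, hx, hy⟩
  have hx' : x ≤ n := hx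
  have hy' : y ≤ n := hy
  simp only [LinearMap.comp_apply, Fop_bv hx' hy', map_smul, alphaOp_bv hx' hy']
  rcases Classical.em (0 < x ∧ 0 < y) with h | h
  · rw [if_pos h, Fop_bv (by omega) (by omega)]
    have heq : (x - 1 = n - 1) ↔ (x = n) := by omega
    simp only [heq]
  · rw [if_neg h]
    simp

lemma id4 : alphaOp ∘ₗ (Dop ∘ₗ aStar - aStar ∘ₗ Dop) = Fop := by
  apply lhom_ext_bv
  rintro ⟨⟨n, x, y⟩, hx, hy⟩
  have hx' : x ≤ n := hx
  have hy' : y ≤ n := hy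
  have p1 : x + 1 ≤ n + 1 := by omega
  have p2 : y + 1 ≤ n + 1 := by omega
  have hs : sUp (⟨(n,x,y),hx,hy⟩ : Idx) = ⟨(n+1,x+1,y+1), p1, p2⟩ := rfl
  have hA : alphaOp (bv (⟨(n+1,x+1,y+1), p1, p2⟩ : Idx)) = bv ⟨(n,x,y),hx,hy⟩ := by
    rw [alphaOp_bv p1 p2, if_pos (by omega)]
    apply congrArg
    apply Subtype.ext
    simp
  simp only [LinearMap.comp_apply, LinearMap.sub_apply, aStar_bv, hs, Dop_bv p1 p2,
    Dop_bv hx' hy', map_smul, map_sub, hA, Fop_bv hx' hy']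
  rw [← sub_smul]
  congr 1
  have heq : (x + 1 = n + 1) ↔ (x = n) := by omega
  simp only [heq]
  push_cast
  split_ifs <;> ring

/-- With `α*` the (formal) adjoint of `α` on the natural domain:
(i) `|D|α - α|D| = -α` and `|D|α* - α*|D| = α*`; (ii) `Fα = αF`;
(iii) `α(Dα* - α*D) = F`. -/
theorem stmt_2 :
    ∃ alphaStar : V →ₗ[ℂ] V,
      (∀ u v : V, inn (alphaStar u) v = inn u (alphaOp v)) ∧
      absDop ∘ₗ alphaOp - alphaOp ∘ₗ absDop = -alphaOp ∧
      absDop ∘ₗ alphaStar - alphaStar ∘ₗ absDop = alphaStar ∧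
      Fop ∘ₗ alphaOp = alphaOp ∘ₗ Fop ∧
      alphaOp ∘ₗ (Dop ∘ₗ alphaStar - alphaStar ∘ₗ Dop) = Fop :=
  ⟨aStar, adj_prop, id1, id2, id3, id4⟩
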